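/- Let n ≥ 1, let η ∈ M_{2n+1}(ℝ) be the diagonal matrix diag(−1, 1, …, 1), and let so(1,2n) := {A ∈ M_{2n+1}(ℝ) : Aᵀη + ηA = 0}; every A ∈ so(1,2n) has block form A = [[0, uᵀ],[u, B]] with u ∈ ℝ^{2n} and B ∈ M_{2n}(ℝ) skew-symmetric. Let j₀ = [[0, −I_n],[I_n, 0]] ∈ M_{2n}(ℝ) and define the linear map J₀⁺ : so(1,2n) → so(1,2n) by J₀⁺([[0, uᵀ],[u, B]]) := [[0, (j₀u)ᵀ],[j₀u, (1/2)(j₀B − Bj₀)]]. Then for all A, A' ∈ so(1,2n), the element N^{J₀⁺}(A,A') := [J₀⁺A, J₀⁺A'] − J₀⁺[J₀⁺A, A'] − J₀⁺[A, J₀⁺A'] − [A, A'] (brackets being matrix commutators) lies in 𝔲(n) := {[[0,0],[0,B]] ∈ so(1,2n) : Bj₀ = j₀B}. -/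
import Mathlib


open Matrix

noncomputable section

/-- Block index type: `Unit ⊕ (Fin n ⊕ Fin n)`, the first summand corresponding to the
`x⁰`-direction and the second to `ℝ^{2n}`. -/
abbrev twIdx (n : ℕ) := Unit ⊕ (Fin n ⊕ Fin n)

/-- The standard complex structure `j₀ = [[0, -Iₙ],[Iₙ, 0]]` on `ℝ^{2n}`. -/
def j0 (n : ℕ) : Matrix (Fin n ⊕ Fin n) (Fin n ⊕ Fin n) ℝ :=
  Matrix.fromBlocks 0 (-1) 1 0

/-- The Lorentz form `η = diag(-1, 1, …, 1)` on `ℝ^{1,2n}`. -/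
def lorentzEta (n : ℕ) : Matrix (twIdx n) (twIdx n) ℝ :=
  Matrix.fromBlocks (-1) 0 0 1

/-- The Lie algebra `so(1,2n) = {A : Aᵀ η + η A = 0}`, as a set of matrices. -/
def soSet (n : ℕ) : Set (Matrix (twIdx n) (twIdx n) ℝ) :=
  {A | Aᵀ * lorentzEta n + lorentzEta n * A = 0}

/-- The map `J₀⁺` sending `[[0, uᵀ],[u, B]]` to `[[0, (j₀u)ᵀ],[j₀u, (1/2)(j₀B - Bj₀)]]`. -/
def Jplus (n : ℕ) (A : Matrix (twIdx n) (twIdx n) ℝ) : Matrix (twIdx n) (twIdx n) ℝ :=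
  Matrix.fromBlocks 0 ((j0 n * A.toBlocks₂₁)ᵀ) (j0 n * A.toBlocks₂₁)
    ((1/2 : ℝ) • (j0 n * A.toBlocks₂₂ - A.toBlocks₂₂ * j0 n))

/-- The algebraic Nijenhuis tensor of `J₀⁺`, the brackets being matrix commutators. -/
def nijJplus (n : ℕ) (A A' : Matrix (twIdx n) (twIdx n) ℝ) :
    Matrix (twIdx n) (twIdx n) ℝ :=
  (Jplus n A * Jplus n A' - Jplus n A' * Jplus n A)
    - Jplus n (Jplus n A * A' - A' * Jplus n A)
    - Jplus n (A * Jplus n A' - Jplus n A' * A)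
    - (A * A' - A' * A)

/-- The subalgebra `𝔲(n) = {[[0,0],[0,B]] ∈ so(1,2n) : Bj₀ = j₀B}`. -/
def unSet (n : ℕ) : Set (Matrix (twIdx n) (twIdx n) ℝ) :=
  {M | M ∈ soSet n ∧ ∃ B : Matrix (Fin n ⊕ Fin n) (Fin n ⊕ Fin n) ℝ,
    M = Matrix.fromBlocks 0 0 0 B ∧ B * j0 n = j0 n * B}

namespace Stmt17

lemma beast {R : Type*} [Ring R] [Module ℝ R] [SMulCommClass ℝ R R] [IsScalarTower ℝ R R]
    (E J A A' : R)
    (hEE : E*E = E) (hEJ : E*J = J) (hJE : J*E = J) (hJJ : J*J = -E)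
    (hA : E*A*E = E*A + A*E - A) (hA' : E*A'*E = E*A' + A'*E - A') :
    ((J*A - A*J - (1/2:ℝ)•(J*A*E - E*A*J)) * (J*A' - A'*J - (1/2:ℝ)•(J*A'*E - E*A'*J)) - (J*A' - A'*J - (1/2:ℝ)•(J*A'*E - E*A'*J)) * (J*A - A*J - (1/2:ℝ)•(J*A*E - E*A*J))) - (J*((J*A - A*J - (1/2:ℝ)•(J*A*E - E*A*J)) * A' - A' * (J*A - A*J - (1/2:ℝ)•(J*A*E - E*A*J))) - ((J*A - A*J - (1/2:ℝ)•(J*A*E - E*A*J)) * A' - A' * (J*A - A*J - (1/2:ℝ)•(J*A*E - E*A*J)))*J - (1/2:ℝ)•(J*((J*A - A*J - (1/2:ℝ)•(J*A*E - E*A*J)) * A' - A' * (J*A - A*J - (1/2:ℝ)•(J*A*E - E*A*J)))*E - E*((J*A - A*J - (1/2:ℝ)•(J*A*E - E*A*J)) * A' - A' * (J*A - A*J - (1/2:ℝ)•(J*A*E - E*A*J)))*J)) - (J*(A * (J*A' - A'*J - (1/2:ℝ)•(J*A'*E - E*A'*J)) - (J*A' - A'*J - (1/2:ℝ)•(J*A'*E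 - E*A'*J)) * A) - (A * (J*A' - A'*J - (1/2:ℝ)•(J*A'*E - E*A'*J)) - (J*A' - A'*J - (1/2:ℝ)•(J*A'*E - E*A'*J)) * A)*J - (1/2:ℝ)•(J*(A * (J*A' - A'*J - (1/2:ℝ)•(J*A'*E - E*A'*J)) - (J*A' - A'*J - (1/2:ℝ)•(J*A'*E - E*A'*J)) * A)*E - E*(A * (J*A' - A'*J - (1/2:ℝ)•(J*A'*E - E*A'*J)) - (J*A' - A'*J - (1/2:ℝ)•(J*A'*E - E*A'*J)) * A)*J)) - (A*A' - A'*A)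
    = -(((1/2:ℝ)•(E*A*E - J*(E*A*E)*J)) * ((1/2:ℝ)•(E*A'*E - J*(E*A'*E)*J)) - ((1/2:ℝ)•(E*A'*E - J*(E*A'*E)*J)) * ((1/2:ℝ)•(E*A*E - J*(E*A*E)*J))) := by
  have hEEx : ∀ x:R, E*(E*x) = E*x := fun x => by rw [← mul_assoc, hEE]
  have hEJx : ∀ x:R, E*(J*x) = J*x := fun x => by rw [← mul_assoc, hEJ]
  have hJEx : ∀ x:R, J*(E*x) = J*x := fun x => by rw [← mul_assoc, hJE]
  have hJJx : ∀ x:R, J*(J*x) = -(E*x) := fun x => by rw [← mul_assoc, hJJ, neg_mul]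
  have hAx : ∀ x:R, E*(A*(E*x)) = E*(A*x) + A*(E*x) - A*x := fun x => by
    have h := congrArg (· * x) hA
    simpa [mul_assoc, add_mul, sub_mul] using h
  have hA'x : ∀ x:R, E*(A'*(E*x)) = E*(A'*x) + A'*(E*x) - A'*x := fun x => by
    have h := congrArg (· * x) hA'
    simpa [mul_assoc, add_mul, sub_mul] using h
  have hAE : E*(A*E) = E*A + A*E - A := by rw [← mul_assoc]; exact hA
  have hA'E : E*(A'*E) = E*A' + A'*E - A' := by rw [← mul_assoc]; exact hA'
  simp only [mul_sub, sub_mul, mul_add, add_mul, smul_mul_assoc, mul_smul_comm, smul_sub,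
    smul_add, smul_smul, mul_assoc, mul_neg, neg_mul, smul_neg, neg_neg, neg_sub,
    hEE, hEJ, hJE, hJJ, hEEx, hEJx, hJEx, hJJx, hAE, hA'E, hAx, hA'x]
  module

lemma j0_mul_j0 (n : ℕ) : j0 n * j0 n = -1 := by
  rw [show (-1 : Matrix (Fin n ⊕ Fin n) (Fin n ⊕ Fin n) ℝ) = -fromBlocks 1 0 0 1 by
    rw [fromBlocks_one], fromBlocks_neg]
  simp [j0, fromBlocks_multiply]

lemma j0_transpose (n : ℕ) : (j0 n)ᵀ = -(j0 n) := by
  rw [j0, fromBlocks_neg, fromBlocks_transpose]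
  simp

lemma unit_mat_symm (a : Matrix Unit Unit ℝ) : aᵀ = a := by
  ext i j; rfl

lemma so_blocks {n : ℕ} {A : Matrix (twIdx n) (twIdx n) ℝ} (hA : A ∈ soSet n) :
    A.toBlocks₁₁ = 0 ∧ A.toBlocks₁₂ = (A.toBlocks₂₁)ᵀ ∧ (A.toBlocks₂₂)ᵀ = -A.toBlocks₂₂ := by
  have hA' : Aᵀ * lorentzEta n + lorentzEta n * A = 0 := hA
  rw [← fromBlocks_toBlocks A] at hA'
  simp only [lorentzEta, fromBlocks_transpose, fromBlocks_multiply, fromBlocks_add,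
    ← fromBlocks_zero, fromBlocks_inj] at hA'
  obtain ⟨h11, h12, h21, h22⟩ := hA'
  simp at h11 h12 h21 h22
  refine ⟨?_, ?_, eq_neg_of_add_eq_zero_left h22⟩
  · rw [unit_mat_symm] at h11
    have h2 := congrArg Neg.neg h11
    simp [neg_add] at h2
    rw [← two_smul ℝ] at h2
    simpa using h2
  · exact ((add_neg_eq_zero).mp h12).symm

lemma so_eq_fromBlocks {n : ℕ} {A : Matrix (twIdx n) (twIdx n) ℝ} (hA : A ∈ soSet n) :
    A = fromBlocks 0 ((A.toBlocks₂₁)ᵀ) (A.toBlocks₂₁) (A.toBlocks₂₂) := by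
  obtain ⟨h1, h2, _⟩ := so_blocks hA
  conv_lhs => rw [← fromBlocks_toBlocks A, h1, h2]

lemma mem_so_of_blocks {n : ℕ} (v : Matrix (Fin n ⊕ Fin n) Unit ℝ)
    (S : Matrix (Fin n ⊕ Fin n) (Fin n ⊕ Fin n) ℝ) (hS : Sᵀ = -S) :
    fromBlocks 0 (vᵀ) v S ∈ soSet n := by
  show _ + _ = 0
  simp only [lorentzEta, fromBlocks_transpose, fromBlocks_multiply, fromBlocks_add, unit_mat_symm,
    transpose_transpose, hS]
  rw [← fromBlocks_zero]
  congr 1 <;> simp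

lemma mem_so_diag {n : ℕ} (S : Matrix (Fin n ⊕ Fin n) (Fin n ⊕ Fin n) ℝ) (hS : Sᵀ = -S) :
    fromBlocks 0 0 0 S ∈ soSet n := by
  have h : fromBlocks (0 : Matrix Unit Unit ℝ) ((0 : Matrix (Fin n ⊕ Fin n) Unit ℝ)ᵀ) 0 S
      ∈ soSet n := mem_so_of_blocks 0 S hS
  simpa using h

def Eb (n : ℕ) : Matrix (twIdx n) (twIdx n) ℝ := Matrix.fromBlocks 0 0 0 1
def Jb (n : ℕ) : Matrix (twIdx n) (twIdx n) ℝ := Matrix.fromBlocks 0 0 0 (j0 n)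

lemma EE (n : ℕ) : Eb n * Eb n = Eb n := by simp [Eb, fromBlocks_multiply]
lemma EJ (n : ℕ) : Eb n * Jb n = Jb n := by simp [Eb, Jb, fromBlocks_multiply]
lemma JE (n : ℕ) : Jb n * Eb n = Jb n := by simp [Eb, Jb, fromBlocks_multiply]
lemma JJ (n : ℕ) : Jb n * Jb n = -Eb n := by
  simp [Eb, Jb, fromBlocks_multiply, j0_mul_j0, fromBlocks_neg]

lemma fromBlocks_sub {l m o p : Type*} {R : Type*} [AddGroup R]
    (A : Matrix l o R) (B : Matrix l p R) (C : Matrix m o R) (D : Matrix m p R)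
    (A' : Matrix l o R) (B' : Matrix l p R) (C' : Matrix m o R) (D' : Matrix m p R) :
    fromBlocks A B C D - fromBlocks A' B' C' D'
      = fromBlocks (A - A') (B - B') (C - C') (D - D') := by
  simp only [sub_eq_add_neg, fromBlocks_neg, fromBlocks_add]

lemma corner {n : ℕ} {A : Matrix (twIdx n) (twIdx n) ℝ} (hA : A ∈ soSet n) :
    Eb n * A * Eb n = Eb n * A + A * Eb n - A := by
  rw [so_eq_fromBlocks hA]
  simp only [Eb, fromBlocks_multiply, fromBlocks_add, fromBlocks_sub, fromBlocks_inj]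
  refine ⟨by simp, by simp, by simp, by simp⟩

lemma jplus_formula {n : ℕ} {A : Matrix (twIdx n) (twIdx n) ℝ} (hA : A ∈ soSet n) :
    Jplus n A = (Jb n * A - A * Jb n)
      - (1/2:ℝ) • (Jb n * A * Eb n - Eb n * A * Jb n) := by
  conv_lhs => rw [Jplus, so_eq_fromBlocks hA]
  conv_rhs => rw [so_eq_fromBlocks hA]
  simp only [Eb, Jb, fromBlocks_multiply, toBlocks_fromBlocks₂₁, toBlocks_fromBlocks₂₂,
    fromBlocks_sub, fromBlocks_smul, fromBlocks_add, fromBlocks_inj]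
  refine ⟨by simp, ?_, by simp, ?_⟩
  · simp [transpose_mul, j0_transpose]
  · simp only [Matrix.mul_zero, Matrix.zero_mul, Matrix.mul_one, Matrix.one_mul, add_zero,
      zero_add, zero_sub, sub_zero, smul_zero, smul_neg]
    module

lemma so_mul_eta {n : ℕ} {A : Matrix (twIdx n) (twIdx n) ℝ} (hA : A ∈ soSet n) :
    Aᵀ * lorentzEta n = -(lorentzEta n * A) :=
  eq_neg_of_add_eq_zero_left hA

lemma so_prod_eta {n : ℕ} {X Y : Matrix (twIdx n) (twIdx n) ℝ}
    (hX : X ∈ soSet n) (hY : Y ∈ soSet n) :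
    (X * Y)ᵀ * lorentzEta n = lorentzEta n * (Y * X) := by
  rw [transpose_mul, mul_assoc, so_mul_eta hX, mul_neg, ← mul_assoc, so_mul_eta hY,
    neg_mul, neg_neg, mul_assoc]

lemma bracket_mem {n : ℕ} {X Y : Matrix (twIdx n) (twIdx n) ℝ}
    (hX : X ∈ soSet n) (hY : Y ∈ soSet n) : X * Y - Y * X ∈ soSet n := by
  show _ + _ = 0
  rw [transpose_sub, sub_mul, so_prod_eta hX hY, so_prod_eta hY hX, mul_sub]
  abel

lemma jplus_mem {n : ℕ} {A : Matrix (twIdx n) (twIdx n) ℝ} (hA : A ∈ soSet n) :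
    Jplus n A ∈ soSet n := by
  obtain ⟨_, _, hB⟩ := so_blocks hA
  rw [Jplus]
  refine mem_so_of_blocks _ _ ?_
  simp only [transpose_smul, transpose_sub, transpose_mul, j0_transpose, hB, mul_neg, neg_mul,
    neg_neg, smul_neg]
  module

lemma Qform {n : ℕ} {A : Matrix (twIdx n) (twIdx n) ℝ} (hA : A ∈ soSet n) :
    (1/2:ℝ) • (Eb n * A * Eb n - Jb n * (Eb n * A * Eb n) * Jb n)
      = fromBlocks 0 0 0 ((1/2:ℝ) • (A.toBlocks₂₂ - j0 n * A.toBlocks₂₂ * j0 n)) := by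
  conv_lhs => rw [so_eq_fromBlocks hA]
  simp only [Eb, Jb, fromBlocks_multiply, fromBlocks_sub, fromBlocks_smul, fromBlocks_inj]
  refine ⟨by simp, by simp, by simp, ?_⟩
  simp [mul_assoc]

end Stmt17

open Stmt17 in
/-- For all `A, A' ∈ so(1,2n)`, the Nijenhuis expression
`N^{J₀⁺}(A,A') = [J₀⁺A, J₀⁺A'] - J₀⁺[J₀⁺A, A'] - J₀⁺[A, J₀⁺A'] - [A, A']`
lies in `𝔲(n)`.  (This underlies the integrability of `J⁺` on the twistor space over
hyperbolic space.) -/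
theorem stmt_17 (n : ℕ) (hn : 1 ≤ n)
    (A A' : Matrix (twIdx n) (twIdx n) ℝ)
    (hA : A ∈ soSet n) (hA' : A' ∈ soSet n) :
    nijJplus n A A' ∈ unSet n := by
  obtain ⟨ha, ht, hB⟩ := so_blocks hA
  obtain ⟨ha', ht', hB'⟩ := so_blocks hA'
  have hjx : ∀ x : Matrix (Fin n ⊕ Fin n) (Fin n ⊕ Fin n) ℝ,
      j0 n * (j0 n * x) = -x := fun x => by
    rw [← mul_assoc, j0_mul_j0, neg_one_mul]
  set Bp : Matrix (Fin n ⊕ Fin n) (Fin n ⊕ Fin n) ℝ :=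
    (1/2:ℝ) • (A.toBlocks₂₂ - j0 n * A.toBlocks₂₂ * j0 n) with hBpdef
  set B'p : Matrix (Fin n ⊕ Fin n) (Fin n ⊕ Fin n) ℝ :=
    (1/2:ℝ) • (A'.toBlocks₂₂ - j0 n * A'.toBlocks₂₂ * j0 n) with hB'pdef
  set C : Matrix (Fin n ⊕ Fin n) (Fin n ⊕ Fin n) ℝ := -(Bp * B'p - B'p * Bp) with hCdef
  have hBpj : Commute (j0 n) Bp := by
    show _ = _
    rw [hBpdef, mul_smul_comm, smul_mul_assoc]
    congr 1
    simp only [mul_sub, sub_mul, mul_assoc, hjx, j0_mul_j0, mul_neg_one, mul_neg, neg_neg, mul_one, one_mul]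
    abel
  have hB'pj : Commute (j0 n) B'p := by
    show _ = _
    rw [hB'pdef, mul_smul_comm, smul_mul_assoc]
    congr 1
    simp only [mul_sub, sub_mul, mul_assoc, hjx, j0_mul_j0, mul_neg_one, mul_neg, neg_neg, mul_one, one_mul]
    abel
  have hBpT : Bpᵀ = -Bp := by
    rw [hBpdef]
    simp only [transpose_smul, transpose_sub, transpose_mul, j0_transpose, hB, mul_neg, neg_mul,
      neg_neg, smul_neg, mul_assoc]
    try module
  have hB'pT : B'pᵀ = -B'p := by
    rw [hB'pdef]
    simp only [transpose_smul, transpose_sub, transpose_mul, j0_transpose, hB', mul_neg, neg_mul,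
      neg_neg, smul_neg, mul_assoc]
    try module
  have hCT : Cᵀ = -C := by
    rw [hCdef]
    simp only [transpose_neg, transpose_sub, transpose_mul, hBpT, hB'pT, mul_neg, neg_mul,
      neg_neg, neg_sub]
    try abel
  have hCj : Commute (j0 n) C := (((hBpj.mul_right hB'pj).sub_right
    (hB'pj.mul_right hBpj))).neg_right
  have hZ1 : Jplus n A * A' - A' * Jplus n A ∈ soSet n := bracket_mem (jplus_mem hA) hA'
  have hZ2 : A * Jplus n A' - Jplus n A' * A ∈ soSet n := bracket_mem hA (jplus_mem hA')
  have hbeast := beast (Eb n) (Jb n) A A' (EE n) (EJ n) (JE n) (JJ n) (corner hA) (corner hA')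
  have key : nijJplus n A A' = fromBlocks 0 0 0 C := by
    rw [nijJplus, jplus_formula hZ1, jplus_formula hZ2, jplus_formula hA, jplus_formula hA']
    rw [hbeast, Qform hA, Qform hA', hCdef]
    rw [← hBpdef, ← hB'pdef]
    simp only [fromBlocks_multiply, fromBlocks_sub, fromBlocks_neg, fromBlocks_inj]
    refine ⟨by simp, by simp, by simp, by simp⟩
  refine ⟨?_, C, key, hCj.symm.eq⟩
  rw [key]
  exact mem_so_diag C hCT

end
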